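/- arXiv:1603.01711 — 4 statements merged into one kernel-verified Lean document; each statement's English description precedes it below -/
import Mathlib

section
/- Let V be a finite-dimensional complex vector space and let Γ : V × V → V be a symmetric bilinear map. Then the following are equivalent: (1) for every v ∈ V the vector Γ(v,v) is proportional to v, i.e. there exists λ ∈ ℂ with Γ(v,v) = λ·v; (2) there exists a linear functional α : V → ℂ such that Γ(u,v) = α(u)·v + α(v)·u for all u, v ∈ V. -/
/-!
Choose, for each `v`, the scalar `L v` with `Γ(v,v) = L v • v` (and `L 0 = 0`); it is
homogeneous since it is unique for `v ≠ 0`. Polarization gives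
`2 Γ(u,v) = (L(u+v) - L u) • u + (L(u+v) - L v) • v`,
and comparing this identity for `(u, v)` and `(u, -v)` shows that `L` is additive on linearly
independent pairs, hence everywhere by homogeneity. Then `α = L / 2` is the required functional.
-/

section ApplySelfEqSmul

variable {K V : Type*} [Field K] [AddCommGroup V] [Module K V]
  {Γ : V →ₗ[K] V →ₗ[K] V} {L : V → K}

theorem map_smul_of_apply_self_eq_smul (hL : ∀ v, Γ v v = L v • v) (hL0 : L 0 = 0)
    (c : K) (v : V) : L (c • v) = c * L v := by
  rcases eq_or_ne (c • v) 0 with hcv | hcv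
  · rcases smul_eq_zero.mp hcv with rfl | rfl <;> simp [hL0]
  · refine smul_left_injective K hcv ?_
    calc L (c • v) • (c • v) = Γ (c • v) (c • v) := (hL _).symm
      _ = (c * L v) • (c • v) := by
        simp only [map_smul, LinearMap.smul_apply, hL v]
        module

theorem two_smul_apply_eq_of_apply_self_eq_smul (hsym : ∀ u v, Γ u v = Γ v u)
    (hL : ∀ v, Γ v v = L v • v) (u v : V) :
    (2 : K) • Γ u v = (L (u + v) - L u) • u + (L (u + v) - L v) • v := by
  have hpolar : (2 : K) • Γ u v = Γ (u + v) (u + v) - Γ u u - Γ v v := by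
    simp only [map_add, LinearMap.add_apply, hsym v u]
    module
  rw [hpolar, hL, hL, hL]
  module

variable [NeZero (2 : K)]

theorem map_add_of_linearIndependent (hsym : ∀ u v, Γ u v = Γ v u)
    (hL : ∀ v, Γ v v = L v • v) (hL0 : L 0 = 0) {u v : V}
    (hind : LinearIndependent K ![u, v]) : L (u + v) = L u + L v := by
  have hplus := two_smul_apply_eq_of_apply_self_eq_smul hsym hL u v
  have hminus := two_smul_apply_eq_of_apply_self_eq_smul hsym hL u (-v)
  have hLneg : L (-v) = -L v := by
    rw [← neg_one_smul K v, map_smul_of_apply_self_eq_smul hL hL0, neg_one_mul]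
  rw [map_neg, hLneg, ← sub_eq_add_neg] at hminus
  have hzero : (L (u - v) + L (u + v) - 2 * L u) • u +
      (L (u + v) - L (u - v) - 2 * L v) • v = 0 := by
    linear_combination (norm := module) -hplus - hminus
  obtain ⟨hu, hv⟩ := LinearIndependent.pair_iff.mp hind _ _ hzero
  have htwice : (2 : K) * (L (u + v) - (L u + L v)) = 0 := by linear_combination hu + hv
  exact sub_eq_zero.mp ((mul_eq_zero.mp htwice).resolve_left two_ne_zero)

theorem map_add_of_apply_self_eq_smul (hsym : ∀ u v, Γ u v = Γ v u)
    (hL : ∀ v, Γ v v = L v • v) (hL0 : L 0 = 0) (u v : V) : L (u + v) = L u + L v := by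
  rcases eq_or_ne v 0 with rfl | hv
  · simp [hL0]
  by_cases hdep : ∃ a : K, a • v = u
  · obtain ⟨a, rfl⟩ := hdep
    rw [show a • v + v = (a + 1) • v by module, map_smul_of_apply_self_eq_smul hL hL0,
      map_smul_of_apply_self_eq_smul hL hL0]
    ring
  · push Not at hdep
    rw [add_comm u, add_comm (L u)]
    exact map_add_of_linearIndependent hsym hL hL0 ((LinearIndependent.pair_iff' hv).mpr hdep)

theorem exists_linearMap_of_apply_self_eq_smul (hsym : ∀ u v, Γ u v = Γ v u)
    (h : ∀ v, ∃ c : K, Γ v v = c • v) :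
    ∃ α : V →ₗ[K] K, ∀ u v, Γ u v = α u • v + α v • u := by
  have h' : ∀ v, ∃ c : K, Γ v v = c • v ∧ (v = 0 → c = 0) := fun v ↦ by
    rcases eq_or_ne v 0 with rfl | hv
    · exact ⟨0, by simp, fun _ ↦ rfl⟩
    · exact (h v).imp fun c hc ↦ ⟨hc, fun h0 ↦ absurd h0 hv⟩
  choose L hL hL0 using h'
  replace hL0 : L 0 = 0 := hL0 0 rfl
  let ℓ : V →ₗ[K] K :=
    { toFun := L
      map_add' := map_add_of_apply_self_eq_smul hsym hL hL0
      map_smul' := map_smul_of_apply_self_eq_smul hL hL0 }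
  refine ⟨(2 : K)⁻¹ • ℓ, fun u v ↦ ?_⟩
  have htwice : (2 : K) • Γ u v = ℓ u • v + ℓ v • u := by
    rw [two_smul_apply_eq_of_apply_self_eq_smul hsym hL,
      map_add_of_apply_self_eq_smul hsym hL hL0]
    module
  calc Γ u v = (2 : K)⁻¹ • (2 : K) • Γ u v := (inv_smul_smul₀ two_ne_zero _).symm
    _ = ((2 : K)⁻¹ • ℓ) u • v + ((2 : K)⁻¹ • ℓ) v • u := by
      rw [htwice, LinearMap.smul_apply, LinearMap.smul_apply]
      module

end ApplySelfEqSmul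

theorem symm_bilinear_proportional_iff_exists_functional_general
    {V : Type*} [AddCommGroup V] [Module ℂ V]
    (Γ : V →ₗ[ℂ] V →ₗ[ℂ] V) (hsym : ∀ u v : V, Γ u v = Γ v u) :
    (∀ v : V, ∃ lam : ℂ, Γ v v = lam • v) ↔
    (∃ α : V →ₗ[ℂ] ℂ, ∀ u v : V, Γ u v = α u • v + α v • u) := by
  refine ⟨exists_linearMap_of_apply_self_eq_smul hsym, ?_⟩
  rintro ⟨α, hα⟩ v
  exact ⟨2 * α v, by rw [hα, ← add_smul, two_mul]⟩

/-- For a symmetric bilinear map `Γ : V × V → V` on a finite-dimensional complex vector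
space, `Γ(v,v)` is proportional to `v` for every `v` if and only if there is a linear
functional `α` with `Γ(u,v) = α(u)•v + α(v)•u` for all `u, v`. -/
theorem symm_bilinear_proportional_iff_exists_functional
    {V : Type*} [AddCommGroup V] [Module ℂ V] [FiniteDimensional ℂ V]
    (Γ : V →ₗ[ℂ] V →ₗ[ℂ] V) (hsym : ∀ u v : V, Γ u v = Γ v u) :
    (∀ v : V, ∃ lam : ℂ, Γ v v = lam • v) ↔
    (∃ α : V →ₗ[ℂ] ℂ, ∀ u v : V, Γ u v = α u • v + α v • u) :=
  symm_bilinear_proportional_iff_exists_functional_general Γ hsym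
end

section
/- Let E be a finite-dimensional real normed vector space, U ⊆ E an open set, Γ : U → (E →L E →L E) a smooth map with Γ(x) symmetric for every x, and α : U → (E →L ℝ) a continuous map. Define Γ̃(x)(u,v) = Γ(x)(u,v) + α(x)(u)·v + α(x)(v)·u. Let c : I → U be a twice differentiable curve with c''(t) + Γ(c(t))(c'(t), c'(t)) = 0 for all t ∈ I (a geodesic of Γ), and let h : J → I be a twice differentiable function on an open real interval J satisfying the reparametrization equation h''(t) + 2·α(c(h(t)))(c'(h(t)))·(h'(t))² = 0 for all t ∈ J. Then the curve c∘h : J → U satisfies (c∘h)''(t) + Γ̃(c(h(t)))((c∘h)'(t), (c∘h)'(t)) = 0 for all t ∈ J, i.e. c∘h is a geodesic of Γ̃. In particular Γ and Γ̃ are projectively equivalent: every geodesic of Γ is, up to reparametrization, a geodesic of Γ̃. -/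
/-- Let `Γ̃` be the projective change of a torsion-free connection `Γ` by a continuous
one-form `α`. If `c` is a geodesic of `Γ` and `h` solves the reparametrization equation
`h'' + 2·α(c(h))(c'(h))·(h')² = 0`, then `c ∘ h` is a geodesic of `Γ̃`. In particular `Γ`
and `Γ̃` are projectively equivalent. -/
theorem reparametrized_geodesic_of_projective_change
    {E : Type*} [NormedAddCommGroup E] [NormedSpace ℝ E] [FiniteDimensional ℝ E]
    (U : Set E) (hU : IsOpen U)
    (Γ Γt : E → E →L[ℝ] E →L[ℝ] E) (α : E → E →L[ℝ] ℝ)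
    (hΓ : ContDiffOn ℝ (⊤ : ℕ∞) Γ U)
    (hsym : ∀ x ∈ U, ∀ u v : E, Γ x u v = Γ x v u)
    (hα : ContinuousOn α U)
    (hΓt : ∀ x ∈ U, ∀ u v : E, Γt x u v = Γ x u v + α x u • v + α x v • u)
    (I : Set ℝ) (hI : IsOpen I) (hI' : I.OrdConnected)
    (c : ℝ → E) (hcU : ∀ t ∈ I, c t ∈ U)
    (hc1 : ∀ t ∈ I, DifferentiableAt ℝ c t)
    (hc2 : ∀ t ∈ I, DifferentiableAt ℝ (deriv c) t)
    (hgeo : ∀ t ∈ I, deriv (deriv c) t + Γ (c t) (deriv c t) (deriv c t) = 0)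
    (J : Set ℝ) (hJ : IsOpen J) (hJ' : J.OrdConnected)
    (h : ℝ → ℝ) (hhI : ∀ t ∈ J, h t ∈ I)
    (hh1 : ∀ t ∈ J, DifferentiableAt ℝ h t)
    (hh2 : ∀ t ∈ J, DifferentiableAt ℝ (deriv h) t)
    (hrep : ∀ t ∈ J,
      deriv (deriv h) t + 2 * α (c (h t)) (deriv c (h t)) * (deriv h t) ^ 2 = 0) :
    ∀ t ∈ J, deriv (deriv (c ∘ h)) t
      + Γt (c (h t)) (deriv (c ∘ h) t) (deriv (c ∘ h) t) = 0 := by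
  intro t ht
  have hxI : h t ∈ I := hhI t ht
  have hxU : c (h t) ∈ U := hcU _ hxI
  have hJev : ∀ᶠ s in nhds t, s ∈ J := hJ.mem_nhds ht
  have hd1 : ∀ s ∈ J, HasDerivAt (c ∘ h) (deriv h s • deriv c (h s)) s := by
    intro s hs
    have hcd : HasDerivAt c (deriv c (h s)) (h s) := (hc1 _ (hhI s hs)).hasDerivAt
    have hhd : HasDerivAt h (deriv h s) s := (hh1 s hs).hasDerivAt
    simpa [mul_comm] using hcd.scomp s hhd
  have hev : deriv (c ∘ h) =ᶠ[nhds t] fun s => deriv h s • deriv c (h s) :=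
    hJev.mono fun s hs => (hd1 s hs).deriv
  have hch : HasDerivAt (fun s => deriv c (h s)) (deriv h t • deriv (deriv c) (h t)) t := by
    simpa [mul_comm, Function.comp_def] using (hc2 _ hxI).hasDerivAt.scomp t (hh1 t ht).hasDerivAt
  have hD : HasDerivAt (fun s => deriv h s • deriv c (h s))
      (deriv (deriv h) t • deriv c (h t) + deriv h t • (deriv h t • deriv (deriv c) (h t))) t := by
    simpa [add_comm] using (hh2 t ht).hasDerivAt.fun_smul hch
  have h2 : deriv (deriv (c ∘ h)) t = deriv (deriv h) t • deriv c (h t)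
      + deriv h t • (deriv h t • deriv (deriv c) (h t)) := by
    rw [hev.deriv_eq]; exact hD.deriv
  have h1 : deriv (c ∘ h) t = deriv h t • deriv c (h t) := (hd1 t ht).deriv
  have hgeo2 : deriv (deriv c) (h t) = -Γ (c (h t)) (deriv c (h t)) (deriv c (h t)) :=
    eq_neg_of_add_eq_zero_left (hgeo _ hxI)
  have hrep2 : deriv (deriv h) t = -(2 * α (c (h t)) (deriv c (h t)) * (deriv h t) ^ 2) :=
    eq_neg_of_add_eq_zero_left (hrep t ht)
  rw [h1, h2, hΓt _ hxU, hgeo2, hrep2]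
  set a := deriv h t
  set u := deriv c (h t)
  set b := α (c (h t)) u with hb
  have e1 : Γ (c (h t)) (a • u) (a • u) = a • a • Γ (c (h t)) u u := by
    simp [map_smul]
  have e2 : α (c (h t)) (a • u) = a * b := by simp [hb]
  rw [e1, e2]
  set G := Γ (c (h t)) u u
  simp only [smul_smul, smul_neg, neg_smul, pow_two]
  module
end

section
/- Let E be a real normed vector space of finite dimension n ≥ 1, U ⊆ E an open set, and D : U → (E →L E →L E) a smooth map such that D(x) is symmetric for every x ∈ U and D(x)(v,v) ∈ ℝ·v for every x ∈ U and v ∈ E. Define α : U → (E →L ℝ) by α(x)(u) = (1/(n+1))·trace(v ↦ D(x)(u,v)). Then α is smooth and D(x)(u,v) = α(x)(u)·v + α(x)(v)·u for all x ∈ U and u, v ∈ E. In particular, if two smooth torsion-free connections Γ and Γ̃ on U satisfy Γ̃(x)(v,v) − Γ(x)(v,v) ∈ ℝ·v for all x ∈ U, v ∈ E, then there is a smooth one-form α on U with Γ̃(x)(u,v) = Γ(x)(u,v) + α(x)(u)·v + α(x)(v)·u. -/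
open Submodule

lemma my_scalar_lemma {M : Type*} [AddCommGroup M] [Module ℝ M] (T : M →ₗ[ℝ] M)
    (h : ∀ v, T v ∈ Submodule.span ℝ {v}) : ∃ c : ℝ, ∀ v, T v = c • v := by
  by_cases hM : ∀ v : M, v = 0
  · exact ⟨0, fun v => by rw [hM v, map_zero, smul_zero]⟩
  push_neg at hM
  obtain ⟨v₀, hv₀⟩ := hM
  obtain ⟨c, hc⟩ := Submodule.mem_span_singleton.mp (h v₀)
  refine ⟨c, fun v => ?_⟩
  obtain ⟨a, ha⟩ := Submodule.mem_span_singleton.mp (h v)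
  by_cases hv : v ∈ Submodule.span ℝ {v₀}
  · obtain ⟨t, ht⟩ := Submodule.mem_span_singleton.mp hv
    rw [← ht, map_smul, ← hc]
    rw [smul_comm]
  · obtain ⟨b, hb⟩ := Submodule.mem_span_singleton.mp (h (v + v₀))
    rw [map_add, ← ha, ← hc] at hb
    have h1 : (b - a) • v = (c - b) • v₀ := by
      rw [sub_smul, sub_smul, sub_eq_sub_iff_add_eq_add]
      rw [smul_add] at hb
      rw [hb]; abel
    by_cases hba : b = a
    · have h2 : (c - b) • v₀ = 0 := by rw [← h1, hba, sub_self, zero_smul]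
      rcases smul_eq_zero.mp h2 with h3 | h3
      · have hcb : c = b := by linarith [h3]
        rw [← ha, hcb, hba]
      · exact absurd h3 hv₀
    · exfalso
      apply hv
      have : v = ((b - a)⁻¹ * (c - b)) • v₀ := by
        rw [mul_smul, ← h1, inv_smul_smul₀ (sub_ne_zero.mpr hba)]
      rw [this]
      exact Submodule.smul_mem _ _ (Submodule.mem_span_singleton_self v₀)

lemma my_exists_phi {E : Type*} [NormedAddCommGroup E] [NormedSpace ℝ E]
    [Nontrivial E] (B : E →L[ℝ] E →L[ℝ] E)
    (hsym : ∀ u v, B u v = B v u)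
    (hprop : ∀ v, B v v ∈ Submodule.span ℝ {v}) :
    ∃ φ : E → ℝ, ∀ u v, B u v = φ u • v + φ v • u := by
  -- polarization
  have pol : ∀ u v : E, (2:ℝ) • B u v ∈ Submodule.span ℝ {u} ⊔ Submodule.span ℝ {v} := by
    intro u v
    have h2 : (2:ℝ) • B u v = B (u+v) (u+v) - B u u - B v v := by
      rw [map_add]
      simp only [ContinuousLinearMap.add_apply, map_add, hsym v u, two_smul]
      abel
    rw [h2]
    have hle : Submodule.span ℝ ({u+v} : Set E) ≤ Submodule.span ℝ {u} ⊔ Submodule.span ℝ {v} :=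
      Submodule.span_le.mpr (Set.singleton_subset_iff.mpr (Submodule.add_mem _
        (Submodule.mem_sup_left (Submodule.mem_span_singleton_self u))
        (Submodule.mem_sup_right (Submodule.mem_span_singleton_self v))))
    exact Submodule.sub_mem _ (Submodule.sub_mem _ (hle (hprop (u+v)))
      (Submodule.mem_sup_left (hprop u))) (Submodule.mem_sup_right (hprop v))
  -- stage A
  have stageA : ∀ u : E, ∃ l : ℝ, (∀ v : E, ∃ m : ℝ, (2:ℝ) • B u v = l • v + m • u) ∧
      ((∀ v : E, v ∈ Submodule.span ℝ {u}) → B u u = l • u) := by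
    intro u
    by_cases hu : u = 0
    · exact ⟨0, fun v => ⟨0, by simp [hu]⟩, fun _ => by simp [hu]⟩
    by_cases htop : ∀ v : E, v ∈ Submodule.span ℝ {u}
    · obtain ⟨l, hl⟩ := Submodule.mem_span_singleton.mp (hprop u)
      refine ⟨l, fun v => ?_, fun _ => hl.symm⟩
      obtain ⟨m, hm⟩ := Submodule.mem_span_singleton.mp (htop ((2:ℝ) • B u v - l • v))
      exact ⟨m, by rw [hm]; abel⟩
    · set S := Submodule.span ℝ ({u} : Set E) with hS
      set g : E →ₗ[ℝ] E ⧸ S := S.mkQ.comp ((2:ℝ) • (B u : E →ₗ[ℝ] E)) with hg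
      have hker : S ≤ LinearMap.ker g := by
        intro z hz
        obtain ⟨a, ha⟩ := Submodule.mem_span_singleton.mp hz
        have hgz : g z = S.mkQ ((2:ℝ) • B u z) := by
          simp [hg, LinearMap.comp_apply]
        rw [LinearMap.mem_ker, hgz, Submodule.mkQ_apply, Submodule.Quotient.mk_eq_zero]
        have hz2 : B u z ∈ S := by
          rw [← ha, map_smul]
          exact Submodule.smul_mem _ _ (hprop u)
        exact Submodule.smul_mem _ _ hz2
      set T := S.liftQ g hker with hT
      have hTapp : ∀ v : E, T (S.mkQ v) = S.mkQ ((2:ℝ) • B u v) := by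
        intro v
        rw [hT, Submodule.mkQ_apply, Submodule.liftQ_apply, hg]
        simp [LinearMap.comp_apply]
      have hTspan : ∀ q : E ⧸ S, T q ∈ Submodule.span ℝ {q} := by
        intro q
        obtain ⟨v, rfl⟩ := Submodule.mkQ_surjective S q
        rw [hTapp]
        have hmem := Submodule.mem_map_of_mem (f := S.mkQ) (pol u v)
        rw [Submodule.map_sup, Submodule.map_span, Submodule.map_span,
          Set.image_singleton, Set.image_singleton] at hmem
        have hu0 : S.mkQ u = 0 := by
          rw [Submodule.mkQ_apply, Submodule.Quotient.mk_eq_zero]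
          exact Submodule.mem_span_singleton_self u
        rw [hu0, Submodule.span_zero_singleton, bot_sup_eq] at hmem
        exact hmem
      obtain ⟨l, hl⟩ := my_scalar_lemma T hTspan
      refine ⟨l, fun v => ?_, fun hall => ?_⟩
      · have h1 : S.mkQ ((2:ℝ) • B u v - l • v) = 0 := by
          have h3 := hl (S.mkQ v)
          rw [hTapp] at h3
          rw [map_sub, h3, map_smul, sub_self]
        rw [Submodule.mkQ_apply, Submodule.Quotient.mk_eq_zero] at h1
        obtain ⟨m, hm⟩ := Submodule.mem_span_singleton.mp h1
        exact ⟨m, by rw [hm]; abel⟩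
      · push_neg at htop
        obtain ⟨w, hw⟩ := htop
        exact absurd (hall w) hw
  choose lam hlam1 hlam2 using stageA
  -- lam 0 = 0
  have lam0 : lam 0 = 0 := by
    obtain ⟨v₀, hv₀⟩ := exists_ne (0 : E)
    obtain ⟨m, hm⟩ := hlam1 0 v₀
    simp only [map_zero, ContinuousLinearMap.zero_apply, smul_zero, add_zero] at hm
    rcases smul_eq_zero.mp hm.symm with h | h
    · exact h
    · exact absurd h hv₀
  -- independence helper
  have indep : ∀ u v : E, u ≠ 0 → v ∉ Submodule.span ℝ ({u} : Set E) →
      ∀ a b : ℝ, a • u = b • v → a = 0 ∧ b = 0 := by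
    intro u v hu hv a b hab
    by_cases hb : b = 0
    · refine ⟨?_, hb⟩
      rw [hb, zero_smul] at hab
      rcases smul_eq_zero.mp hab with h | h
      · exact h
      · exact absurd h hu
    · exfalso
      apply hv
      have : v = (b⁻¹ * a) • u := by rw [mul_smul, hab, inv_smul_smul₀ hb]
      rw [this]
      exact Submodule.smul_mem _ _ (Submodule.mem_span_singleton_self u)
  -- key identity for "independent" pairs
  have key : ∀ u v : E, u ≠ 0 → v ∉ Submodule.span ℝ ({u} : Set E) →
      (2:ℝ) • B u v = lam u • v + lam v • u := by
    intro u v hu hv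
    have hv0 : v ≠ 0 := fun h => hv (h ▸ Submodule.zero_mem _)
    obtain ⟨m, hm⟩ := hlam1 u v
    obtain ⟨m', hm'⟩ := hlam1 v u
    rw [hsym u v, hm'] at hm
    have heq : (lam v - m) • u = (lam u - m') • v := by
      rw [sub_smul, sub_smul, sub_eq_sub_iff_add_eq_add]
      exact hm
    obtain ⟨h1, h2⟩ := indep u v hu hv _ _ heq
    have hmv : m' = lam u := by linarith
    rw [hsym u v, hm', hmv]; abel
  -- additivity on independent pairs
  have addi : ∀ u w : E, u ≠ 0 → w ∉ Submodule.span ℝ ({u} : Set E) →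
      lam (u + w) = lam u + lam w := by
    intro u w hu hw
    have hw0 : w ≠ 0 := fun h => hw (h ▸ Submodule.zero_mem _)
    have huw0 : u + w ≠ 0 := by
      intro h
      apply hw
      have : w = -u := by rw [← zero_sub, ← h]; abel
      rw [this]
      exact Submodule.neg_mem _ (Submodule.mem_span_singleton_self u)
    set v := u - w with hv
    have hv0 : v ≠ 0 := by
      intro h
      apply hw
      have : w = u := by rw [hv] at h; linear_combination (norm := abel) -h
      rw [this]; exact Submodule.mem_span_singleton_self u
    have hv_u : v ∉ Submodule.span ℝ ({u} : Set E) := by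
      intro h
      obtain ⟨s, hs⟩ := Submodule.mem_span_singleton.mp h
      apply hw
      have : w = (1 - s) • u := by
        rw [sub_smul, one_smul, hs, hv]; abel
      rw [this]; exact Submodule.smul_mem _ _ (Submodule.mem_span_singleton_self u)
    have hv_w : v ∉ Submodule.span ℝ ({w} : Set E) := by
      intro h
      obtain ⟨s, hs⟩ := Submodule.mem_span_singleton.mp h
      have hus : u = (s + 1) • w := by rw [add_smul, one_smul, hs, hv]; abel
      by_cases hs1 : s + 1 = 0
      · rw [hs1, zero_smul] at hus; exact hu hus
      · apply hw
        have : w = (s+1)⁻¹ • u := by rw [hus, inv_smul_smul₀ hs1]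
        rw [this]; exact Submodule.smul_mem _ _ (Submodule.mem_span_singleton_self u)
    have hv_uw : v ∉ Submodule.span ℝ ({u + w} : Set E) := by
      intro h
      obtain ⟨s, hs⟩ := Submodule.mem_span_singleton.mp h
      -- s • (u + w) = u - w  ⇒  (1 - s) • u = (1 + s) • w
      have hkey : (1 - s) • u = (1 + s) • w := by
        rw [sub_smul, one_smul, add_smul, one_smul]
        rw [smul_add, hv] at hs
        linear_combination (norm := abel) -hs
      by_cases hs1 : 1 + s = 0
      · rw [hs1, zero_smul] at hkey
        rcases smul_eq_zero.mp hkey with h' | h'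
        · linarith
        · exact absurd h' hu
      · apply hw
        have : w = ((1+s)⁻¹ * (1 - s)) • u := by
          rw [mul_smul, hkey, inv_smul_smul₀ hs1]
        rw [this]; exact Submodule.smul_mem _ _ (Submodule.mem_span_singleton_self u)
    -- now combine
    have k1 := key (u + w) v huw0 hv_uw
    have k2 := key u v hu hv_u
    have k3 := key w v hw0 hv_w
    have hB : B (u + w) v = B u v + B w v := by
      rw [map_add]; rfl
    have hcomb : (lam (u+w) - lam u - lam w) • v = 0 := by
      rw [hB, smul_add] at k1
      rw [k2, k3] at k1
      rw [sub_smul, sub_smul]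
      rw [smul_add] at k1
      linear_combination (norm := module) -k1
    rcases smul_eq_zero.mp hcomb with h | h
    · linarith [h]
    · exact absurd h hv0
  -- B u u = lam u • u
  have stageB : ∀ u : E, B u u = lam u • u := by
    intro u
    by_cases hu : u = 0
    · simp [hu]
    by_cases htop : ∀ v : E, v ∈ Submodule.span ℝ ({u} : Set E)
    · exact hlam2 u htop
    push_neg at htop
    obtain ⟨w, hw⟩ := htop
    have hw0 : w ≠ 0 := fun h => hw (h ▸ Submodule.zero_mem _)
    have huw : u + w ∉ Submodule.span ℝ ({u} : Set E) := by
      intro h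
      obtain ⟨s, hs⟩ := Submodule.mem_span_singleton.mp h
      apply hw
      have : w = (s - 1) • u := by rw [sub_smul, one_smul, hs]; abel
      rw [this]; exact Submodule.smul_mem _ _ (Submodule.mem_span_singleton_self u)
    have k1 := key u (u + w) hu huw
    have k2 := key u w hu hw
    have hadd := addi u w hu hw
    have hB : B u (u + w) = B u u + B u w := map_add _ _ _
    have h2 : (2:ℝ) • B u u = (2:ℝ) • (lam u • u) := by
      rw [hB, smul_add, k2, hadd] at k1
      rw [smul_add, add_smul] at k1
      linear_combination (norm := module) k1
    exact smul_right_injective E (two_ne_zero) h2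
  -- homogeneity for nonzero scalar
  have homog : ∀ (t : ℝ) (u : E), t ≠ 0 → u ≠ 0 → lam (t • u) = t * lam u := by
    intro t u ht hu
    have h1 := stageB (t • u)
    simp only [map_smul, ContinuousLinearMap.smul_apply, smul_smul, stageB u] at h1
    have h3 := smul_left_injective ℝ hu h1
    have h4 : t * (lam (t • u) - t * lam u) = 0 := by linear_combination -h3
    rcases mul_eq_zero.mp h4 with h' | h'
    · exact absurd h' ht
    · linarith [sub_eq_zero.mp h']
  -- conclusion
  have final : ∀ u v : E, B u v = (lam u / 2) • v + (lam v / 2) • u := by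
    intro u v
    by_cases hu : u = 0
    · simp [hu, lam0]
    by_cases hv0 : v = 0
    · simp [hv0, lam0]
    by_cases hv : v ∈ Submodule.span ℝ ({u} : Set E)
    · obtain ⟨t, ht⟩ := Submodule.mem_span_singleton.mp hv
      have ht0 : t ≠ 0 := by
        intro h; rw [h, zero_smul] at ht; exact hv0 ht.symm
      rw [← ht, homog t u ht0 hu, map_smul, stageB u]
      module
    · have hk := key u v hu hv
      have h4 : (2:ℝ) • B u v = (2:ℝ) • ((lam u / 2) • v + (lam v / 2) • u) := by
        rw [hk]; module
      exact smul_right_injective E (two_ne_zero) h4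
  exact ⟨fun u => lam u / 2, final⟩

lemma my_traceR (T : ℝ →ₗ[ℝ] ℝ) : LinearMap.trace ℝ ℝ T = T 1 := by
  have hT : T = T 1 • LinearMap.id := by
    ext
    simp
  rw [hT, map_smul, LinearMap.trace_id]
  simp

lemma my_trace_formula {E : Type*} [NormedAddCommGroup E] [NormedSpace ℝ E]
    [FiniteDimensional ℝ E]
    (B : E →L[ℝ] E →L[ℝ] E) (φ : E → ℝ)
    (hform : ∀ u v, B u v = φ u • v + φ v • u) (u : E) (hu : u ≠ 0) :
    LinearMap.trace ℝ E (B u : E →ₗ[ℝ] E) = ((Module.finrank ℝ E : ℝ) + 1) * φ u := by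
  obtain ⟨f, hf1, hfu⟩ := exists_dual_vector ℝ u (norm_ne_zero_iff.mpr hu)
  set g : E →L[ℝ] ℝ := ‖u‖⁻¹ • f with hg
  have hgu : g u = 1 := by
    rw [hg, ContinuousLinearMap.smul_apply, hfu, smul_eq_mul]
    exact inv_mul_cancel₀ (norm_ne_zero_iff.mpr hu)
  set L : E →ₗ[ℝ] E := (B u : E →ₗ[ℝ] E) - φ u • LinearMap.id with hLdef
  have hL : ∀ v, L v = φ v • u := by
    intro v
    rw [hLdef, LinearMap.sub_apply, LinearMap.smul_apply, LinearMap.id_apply,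
      ContinuousLinearMap.coe_coe, hform u v]
    abel
  have hcomp : L = (LinearMap.toSpanSingleton ℝ E u).comp ((g : E →ₗ[ℝ] ℝ).comp L) := by
    ext v
    simp only [LinearMap.comp_apply, LinearMap.toSpanSingleton_apply,
      ContinuousLinearMap.coe_coe, hL, map_smul, hgu, smul_eq_mul, mul_one]
  have htrL : LinearMap.trace ℝ E L = φ u := by
    rw [hcomp, LinearMap.trace_comp_comm', my_traceR, LinearMap.comp_apply,
      LinearMap.comp_apply, LinearMap.toSpanSingleton_apply, one_smul,
      ContinuousLinearMap.coe_coe, hL u, map_smul, hgu, smul_eq_mul, mul_one]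
  have hBL : (B u : E →ₗ[ℝ] E) = L + φ u • LinearMap.id := by
    rw [hLdef]; abel
  rw [hBL, map_add, map_smul, LinearMap.trace_id, htrL, smul_eq_mul]
  ring

lemma my_main {E : Type*} [NormedAddCommGroup E] [NormedSpace ℝ E] [FiniteDimensional ℝ E]
    (hn : 1 ≤ Module.finrank ℝ E) (U : Set E) (hU : IsOpen U)
    (D : E → E →L[ℝ] E →L[ℝ] E) (hD : ContDiffOn ℝ (⊤ : ℕ∞) D U)
    (hsym : ∀ x ∈ U, ∀ u v : E, D x u v = D x v u)
    (hprop : ∀ x ∈ U, ∀ v : E, D x v v ∈ Submodule.span ℝ {v})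
    (α : E → E →L[ℝ] ℝ)
    (hα : ∀ x ∈ U, ∀ u : E, α x u = (1 / ((Module.finrank ℝ E : ℝ) + 1)) *
        LinearMap.trace ℝ E (D x u : E →ₗ[ℝ] E)) :
    ContDiffOn ℝ (⊤ : ℕ∞) α U ∧ ∀ x ∈ U, ∀ u v : E, D x u v = α x u • v + α x v • u := by
  have hnt : Nontrivial E := Module.finrank_pos_iff.mp hn
  have hne : ((Module.finrank ℝ E : ℝ) + 1) ≠ 0 := by positivity
  constructor
  · -- smoothness
    set tr2 : (E →L[ℝ] E) →L[ℝ] ℝ :=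
      LinearMap.toContinuousLinearMap
        ((LinearMap.trace ℝ E) ∘ₗ (ContinuousLinearMap.coeLM ℝ)) with htr2
    have htr2app : ∀ A : E →L[ℝ] E, tr2 A = LinearMap.trace ℝ E (A : E →ₗ[ℝ] E) := by
      intro A
      rw [htr2, LinearMap.coe_toContinuousLinearMap']
      rfl
    set gfun : E → E →L[ℝ] ℝ := fun x => (1 / ((Module.finrank ℝ E : ℝ) + 1)) •
      ((ContinuousLinearMap.compL ℝ E (E →L[ℝ] E) ℝ tr2) (D x)) with hgfun
    have hg : ContDiffOn ℝ (⊤ : ℕ∞) gfun U := by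
      apply ContDiffOn.const_smul
      exact ((ContinuousLinearMap.compL ℝ E (E →L[ℝ] E) ℝ tr2).contDiff).comp_contDiffOn hD
    apply hg.congr
    intro x hx
    ext u
    rw [hα x hx u, hgfun]
    simp only [ContinuousLinearMap.smul_apply, ContinuousLinearMap.compL_apply,
      ContinuousLinearMap.comp_apply, htr2app, smul_eq_mul]
  · intro x hx u v
    obtain ⟨φ, hφ⟩ := my_exists_phi (D x) (hsym x hx) (hprop x hx)
    have hαφ : ∀ w : E, w ≠ 0 → α x w = φ w := by
      intro w hw
      rw [hα x hx w, my_trace_formula (D x) φ hφ w hw]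
      field_simp
    by_cases hu : u = 0
    · simp [hu]
    by_cases hv : v = 0
    · simp [hv]
    rw [hφ u v, hαφ u hu, hαφ v hv]


/-- If `D` is a smooth field of symmetric bilinear maps on an open set `U` of an
`n`-dimensional real normed space with `D(x)(v,v) ∈ ℝ·v` everywhere, then with
`α(x)(u) = (1/(n+1))·trace(v ↦ D(x)(u,v))` one has that `α` is smooth and
`D(x)(u,v) = α(x)(u)•v + α(x)(v)•u`. In particular, two smooth torsion-free connections
whose difference is pointwise projective differ by a smooth one-form via the projective
change formula. -/
theorem pointwise_projective_difference_is_one_form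
    {E : Type*} [NormedAddCommGroup E] [NormedSpace ℝ E] [FiniteDimensional ℝ E]
    (hn : 1 ≤ Module.finrank ℝ E)
    (U : Set E) (hU : IsOpen U)
    (D : E → E →L[ℝ] E →L[ℝ] E)
    (hD : ContDiffOn ℝ (⊤ : ℕ∞) D U)
    (hsym : ∀ x ∈ U, ∀ u v : E, D x u v = D x v u)
    (hprop : ∀ x ∈ U, ∀ v : E, D x v v ∈ Submodule.span ℝ {v})
    (α : E → E →L[ℝ] ℝ)
    (hα : ∀ x ∈ U, ∀ u : E, α x u =
      (1 / ((Module.finrank ℝ E : ℝ) + 1)) *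
        LinearMap.trace ℝ E (D x u : E →ₗ[ℝ] E)) :
    (ContDiffOn ℝ (⊤ : ℕ∞) α U ∧
      ∀ x ∈ U, ∀ u v : E, D x u v = α x u • v + α x v • u) ∧
    (∀ Γ Γt : E → E →L[ℝ] E →L[ℝ] E,
      ContDiffOn ℝ (⊤ : ℕ∞) Γ U → ContDiffOn ℝ (⊤ : ℕ∞) Γt U →
      (∀ x ∈ U, ∀ u v : E, Γ x u v = Γ x v u) →
      (∀ x ∈ U, ∀ u v : E, Γt x u v = Γt x v u) →
      (∀ x ∈ U, ∀ v : E, Γt x v v - Γ x v v ∈ Submodule.span ℝ {v}) →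
      ∃ β : E → E →L[ℝ] ℝ, ContDiffOn ℝ (⊤ : ℕ∞) β U ∧
        ∀ x ∈ U, ∀ u v : E, Γt x u v = Γ x u v + β x u • v + β x v • u) := by
  refine ⟨my_main hn U hU D hD hsym hprop α hα, ?_⟩
  intro Γ Γt hΓ hΓt hsΓ hsΓt hdiff
  set tr2 : (E →L[ℝ] E) →L[ℝ] ℝ :=
    LinearMap.toContinuousLinearMap
      ((LinearMap.trace ℝ E) ∘ₗ (ContinuousLinearMap.coeLM ℝ)) with htr2
  have htr2app : ∀ A : E →L[ℝ] E, tr2 A = LinearMap.trace ℝ E (A : E →ₗ[ℝ] E) := by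
    intro A
    rw [htr2, LinearMap.coe_toContinuousLinearMap']
    rfl
  set β : E → E →L[ℝ] ℝ := fun x => (1 / ((Module.finrank ℝ E : ℝ) + 1)) •
    (tr2.comp (Γt x - Γ x)) with hβdef
  have hβ : ∀ x ∈ U, ∀ u : E, β x u = (1 / ((Module.finrank ℝ E : ℝ) + 1)) *
      LinearMap.trace ℝ E (((fun x => Γt x - Γ x) x) u : E →ₗ[ℝ] E) := by
    intro x hx u
    rw [hβdef]
    simp only [ContinuousLinearMap.smul_apply, ContinuousLinearMap.comp_apply,
      htr2app, smul_eq_mul]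
  have hsym' : ∀ x ∈ U, ∀ u v : E, (fun x => Γt x - Γ x) x u v = (fun x => Γt x - Γ x) x v u := by
    intro x hx u v
    simp only [ContinuousLinearMap.sub_apply]
    rw [hsΓt x hx u v, hsΓ x hx u v]
  have hprop' : ∀ x ∈ U, ∀ v : E, (fun x => Γt x - Γ x) x v v ∈ Submodule.span ℝ {v} := by
    intro x hx v
    simp only [ContinuousLinearMap.sub_apply]
    exact hdiff x hx v
  obtain ⟨hsm, hform⟩ := my_main hn U hU (fun x => Γt x - Γ x) (hΓt.sub hΓ) hsym' hprop' β hβ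
  refine ⟨β, hsm, fun x hx u v => ?_⟩
  have hthis := hform x hx u v
  simp only [ContinuousLinearMap.sub_apply] at hthis
  rw [sub_eq_iff_eq_add] at hthis
  rw [hthis]
  abel
end

section
/- Let E be a finite-dimensional real normed vector space, U ⊆ E an open set, Γ : U → (E →L E →L E) a smooth map with Γ(x) symmetric for every x. Let c : I → U be a twice differentiable curve and f : I → ℝ a function such that c''(t) + Γ(c(t))(c'(t), c'(t)) = f(t)·c'(t) for all t ∈ I (c is a pregeodesic with proportionality factor f). If h : J → I is a twice differentiable function on an open real interval J satisfying h''(t) + f(h(t))·(h'(t))² = 0 for all t ∈ J, then c∘h is a geodesic of Γ: (c∘h)''(t) + Γ(c(h(t)))((c∘h)'(t), (c∘h)'(t)) = 0 for all t ∈ J. Thus every pregeodesic admitting such a reparametrization becomes a geodesic after reparametrizing. -/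
/-- If `c` is a pregeodesic of a torsion-free connection `Γ` with proportionality factor
`f` (i.e. `c'' + Γ(c)(c',c') = f·c'`) and `h` solves the reparametrization equation
`h'' + f(h)·(h')² = 0`, then `c ∘ h` is a geodesic of `Γ`. -/
theorem pregeodesic_reparametrizes_to_geodesic
    {E : Type*} [NormedAddCommGroup E] [NormedSpace ℝ E] [FiniteDimensional ℝ E]
    (U : Set E) (hU : IsOpen U)
    (Γ : E → E →L[ℝ] E →L[ℝ] E)
    (hΓ : ContDiffOn ℝ (⊤ : ℕ∞) Γ U)
    (hsym : ∀ x ∈ U, ∀ u v : E, Γ x u v = Γ x v u)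
    (I : Set ℝ) (hI : IsOpen I) (hI' : I.OrdConnected)
    (c : ℝ → E) (hcU : ∀ t ∈ I, c t ∈ U)
    (hc1 : ∀ t ∈ I, DifferentiableAt ℝ c t)
    (hc2 : ∀ t ∈ I, DifferentiableAt ℝ (deriv c) t)
    (f : ℝ → ℝ)
    (hpre : ∀ t ∈ I,
      deriv (deriv c) t + Γ (c t) (deriv c t) (deriv c t) = f t • deriv c t)
    (J : Set ℝ) (hJ : IsOpen J) (hJ' : J.OrdConnected)
    (h : ℝ → ℝ) (hhI : ∀ t ∈ J, h t ∈ I)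
    (hh1 : ∀ t ∈ J, DifferentiableAt ℝ h t)
    (hh2 : ∀ t ∈ J, DifferentiableAt ℝ (deriv h) t)
    (hrep : ∀ t ∈ J, deriv (deriv h) t + f (h t) * (deriv h t) ^ 2 = 0) :
    ∀ t ∈ J, deriv (deriv (c ∘ h)) t
      + Γ (c (h t)) (deriv (c ∘ h) t) (deriv (c ∘ h) t) = 0 := by
  intro t ht
  have hde : ∀ s ∈ J, deriv (c ∘ h) s = deriv h s • deriv c (h s) := by
    intro s hs
    exact deriv.scomp s (hc1 _ (hhI s hs)) (hh1 s hs)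
  have hev : deriv (c ∘ h) =ᶠ[nhds t] fun s => deriv h s • deriv c (h s) :=
    Filter.eventuallyEq_of_mem (hJ.mem_nhds ht) hde
  have h2 : deriv (deriv (c ∘ h)) t = deriv (fun s => deriv h s • deriv c (h s)) t :=
    hev.deriv_eq
  have hdh : HasDerivAt h (deriv h t) t := (hh1 t ht).hasDerivAt
  have hdh' : HasDerivAt (deriv h) (deriv (deriv h) t) t := (hh2 t ht).hasDerivAt
  have hdc : HasDerivAt (fun s => deriv c (h s)) (deriv h t • deriv (deriv c) (h t)) t :=
    ((hc2 _ (hhI t ht)).hasDerivAt).scomp t hdh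
  have hprod : HasDerivAt (fun s => deriv h s • deriv c (h s))
      (deriv h t • (deriv h t • deriv (deriv c) (h t)) + deriv (deriv h) t • deriv c (h t)) t :=
    hdh'.smul hdc
  rw [h2, hprod.deriv, hde t ht]
  have hc'' : deriv (deriv c) (h t)
      = f (h t) • deriv c (h t) - Γ (c (h t)) (deriv c (h t)) (deriv c (h t)) :=
    eq_sub_of_add_eq (hpre (h t) (hhI t ht))
  have hr : deriv (deriv h) t = -(f (h t) * (deriv h t) ^ 2) := by
    have := hrep t ht; linarith
  rw [hc'', hr]
  simp only [map_smul, ContinuousLinearMap.smul_apply, smul_sub, smul_smul]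
  match_scalars <;> ring
end
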